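/- Let G = (V, E) be a graph with |V| = 3t for some t ≥ 1. Define an instance of Seat Arrangement with agents P = V ∪ {x, y, z} (three new 'super' agents) and symmetric preferences: f_p(q) = 2 for distinct p, q ∈ {x, y, z}; f_p(q) = 1 whenever exactly one of p, q is in {x, y, z}; f_u(v) = 1 for u, v ∈ V with {u,v} ∈ E; and f_u(v) = 0 for u, v ∈ V with {u,v} ∉ E. Let the seat graph H be the disjoint union of t + 1 triangles. Then an envy-free arrangement exists in H if and only if V can be partitioned into t sets of size 3 each of which induces a triangle in G. -/

import Mathlib

open scoped Classical

noncomputable section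

namespace SeatArrangement

variable {P V : Type*}

/-- The utility of agent `p` under arrangement `π`:
the sum, over the seat-graph neighbors `v` of `π p`, of `p`'s preference for the agent seated
at `v`. -/
def utility [Fintype V] (G : SimpleGraph V) (f : P → P → ℝ) (π : P ≃ V) (p : P) : ℝ :=
  ∑ v : V, if G.Adj (π p) v then f p (π.symm v) else 0

/-- The social welfare of an arrangement: the sum of the utilities of all agents. -/
def sw [Fintype P] [Fintype V] (G : SimpleGraph V) (f : P → P → ℝ) (π : P ≃ V) : ℝ :=
  ∑ p : P, utility G f π p

/-- The `(p,q)`-swap arrangement of `π`. -/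
def swapArr (π : P ≃ V) (p q : P) : P ≃ V := (Equiv.swap p q).trans π

/-- `{p, q}` is a blocking pair for `π`: both agents strictly improve by swapping seats. -/
def blocking [Fintype V] (G : SimpleGraph V) (f : P → P → ℝ) (π : P ≃ V) (p q : P) : Prop :=
  p ≠ q ∧ utility G f π p < utility G f (swapArr π p q) p
        ∧ utility G f π q < utility G f (swapArr π p q) q

/-- An arrangement is stable if it has no blocking pair. -/
def stable [Fintype V] (G : SimpleGraph V) (f : P → P → ℝ) (π : P ≃ V) : Prop :=
  ∀ p q : P, ¬ blocking G f π p q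

/-- An arrangement is envy-free if no agent would strictly improve by taking
another agent's seat (via a swap). -/
def envyFree [Fintype V] (G : SimpleGraph V) (f : P → P → ℝ) (π : P ≃ V) : Prop :=
  ∀ p q : P, p ≠ q → utility G f (swapArr π p q) p ≤ utility G f π p

/-- The least utility of an agent under `π` (for a finite nonempty set of agents, the
infimum of the range of utilities is the minimum utility). -/
def minUtil [Fintype V] (G : SimpleGraph V) (f : P → P → ℝ) (π : P ≃ V) : ℝ :=
  sInf (Set.range (utility G f π))

/-- A maximin arrangement maximizes the least utility of an agent. -/
def maximin [Fintype V] (G : SimpleGraph V) (f : P → P → ℝ) (πf : P ≃ V) : Prop :=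
  ∀ π : P ≃ V, minUtil G f π ≤ minUtil G f πf

/-- A maximum arrangement maximizes the social welfare. -/
def maximum [Fintype P] [Fintype V] (G : SimpleGraph V) (f : P → P → ℝ) (πm : P ≃ V) : Prop :=
  ∀ π : P ≃ V, sw G f π ≤ sw G f πm

end SeatArrangement

open SeatArrangement

/-- Preferences for STATEMENT 12: agents are `V(G) ⊕ Fin 3`, where the three agents of
`Fin 3` are the super agents `x, y, z`. Super agents mutually have preference 2; a super
agent and an ordinary agent mutually have preference 1; two ordinary agents have mutual
preference 1 if they are adjacent in `G` and 0 otherwise. -/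
def prefs12 {W : Type*} (G : SimpleGraph W) : (W ⊕ Fin 3) → (W ⊕ Fin 3) → ℝ
  | .inr _, .inr _ => 2
  | .inr _, .inl _ => 1
  | .inl _, .inr _ => 1
  | .inl u, .inl v => if G.Adj u v then 1 else 0

/-- The disjoint union of `s` triangles. -/
def triangles (s : ℕ) : SimpleGraph (Fin s × Fin 3) where
  Adj x y := x.1 = y.1 ∧ x.2 ≠ y.2
  symm := by
    constructor
    rintro x y ⟨h1, h2⟩
    exact ⟨h1.symm, h2.symm⟩
  loopless := by
    constructor
    rintro x ⟨h1, h2⟩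
    exact h2 rfl

/-!
On `s` disjoint triangles an agent's utility is the sum of its preferences for its two
table-mates, so an ordinary agent gets at most `2` and a super agent at most `4`. Seating the
classes of a triangle partition at their own tables and the super agents at the last one, every
agent attains its bound, so nobody is envious.

Conversely, in an envy-free arrangement a super agent with no other super agent at its table has
utility `2`, but it would get at least `2 + 1` in the seat of a table-mate of another super agent;
hence the super agents fill one table. An ordinary agent next to a non-neighbour then has utility
at most `1`, while the seat of a super agent would give it `2`. So the other `t` tables are
triangles of `G`.
-/

lemma fin_three_exists_unique_preimage {α : Type*} (f : Fin 3 → α) {i j : Fin 3} (h : f i ≠ f j) :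
    ∃ a, ∀ k, f k = f a → k = a := by
  by_contra! hf
  obtain ⟨k₀, h₀, hk₀⟩ := hf 0
  obtain ⟨k₁, h₁, hk₁⟩ := hf 1
  obtain ⟨k₂, h₂, hk₂⟩ := hf 2
  apply h
  fin_cases i <;> fin_cases j <;> fin_cases k₀ <;> fin_cases k₁ <;> fin_cases k₂ <;> simp_all

lemma exists_equiv_prod_fst_eq_of_card_fiber {α ι : Type*} [Fintype α] [DecidableEq ι]
    (g : α → ι) {n : ℕ} (h : ∀ c, (Finset.univ.filter fun v => g v = c).card = n) :
    ∃ ρ : α ≃ ι × Fin n, ∀ v, (ρ v).1 = g v :=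
  ⟨(Equiv.sigmaFiberEquiv g).symm.trans <|
    (Equiv.sigmaCongrRight fun c =>
      Fintype.equivFinOfCardEq ((Fintype.card_subtype _).trans (h c))).trans <|
    Equiv.sigmaEquivProd ι (Fin n), fun _ => rfl⟩

namespace SeatArrangement

open Finset

section Triangles

variable {P : Type*} [Fintype P] {s : ℕ}

def table (π : P ≃ Fin s × Fin 3) (i : Fin s) : Finset P :=
  univ.filter fun q => (π q).1 = i

def tableMates (π : P ≃ Fin s × Fin 3) (p : P) : Finset P :=
  (table π (π p).1).erase p

variable {π : P ≃ Fin s × Fin 3} {p q : P} {i : Fin s}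

@[simp]
lemma mem_table : q ∈ table π i ↔ (π q).1 = i := by
  simp [table]

lemma mem_tableMates : q ∈ tableMates π p ↔ q ≠ p ∧ (π q).1 = (π p).1 := by
  simp [tableMates]

lemma mem_tableMates_comm : q ∈ tableMates π p ↔ p ∈ tableMates π q := by
  simp only [mem_tableMates]
  exact and_congr ne_comm eq_comm

lemma card_table (π : P ≃ Fin s × Fin 3) (i : Fin s) : #(table π i) = 3 := by
  have : table π i = (({i} : Finset (Fin s)) ×ˢ univ).map π.symm.toEmbedding := by
    ext q
    simp only [mem_table, mem_map_equiv, Equiv.symm_symm, mem_product, mem_singleton, mem_univ,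
      and_true]
  simp [this]

lemma card_tableMates (π : P ≃ Fin s × Fin 3) (p : P) : #(tableMates π p) = 2 := by
  rw [tableMates, card_erase_of_mem (by simp), card_table]

lemma utility_triangles (f : P → P → ℝ) (π : P ≃ Fin s × Fin 3) (p : P) :
    utility (triangles s) f π p = ∑ q ∈ tableMates π p, f p q := by
  rw [utility, ← Equiv.sum_comp π, ← sum_filter]
  refine sum_congr ?_ fun q _ => by simp
  ext q
  rw [mem_filter]
  simp only [mem_univ, true_and, triangles, mem_tableMates, ← π.injective.ne_iff, ne_eq,
    Prod.ext_iff]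
  tauto

lemma tableMates_swapArr (h : (π p).1 ≠ (π q).1) :
    tableMates (swapArr π p q) p = tableMates π q := by
  ext r
  simp only [mem_tableMates, swapArr, Equiv.trans_apply, Equiv.swap_apply_left]
  rcases eq_or_ne r p with rfl | hrp
  · simp [h]
  rcases eq_or_ne r q with rfl | hrq
  · simpa [hrp] using h
  · simp [Equiv.swap_apply_of_ne_of_ne hrp hrq, hrp, hrq]

lemma exists_sum_tableMates_eq_add (hq : q ∈ tableMates π p) (φ : P → ℝ) :
    ∃ r ∈ tableMates π p, ∑ x ∈ tableMates π p, φ x = φ q + φ r := by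
  obtain ⟨r, hr⟩ := card_eq_one.mp (by rw [card_erase_of_mem hq, card_tableMates])
  refine ⟨r, mem_of_mem_erase (hr ▸ mem_singleton_self r), ?_⟩
  rw [← add_sum_erase _ _ hq, hr, sum_singleton]

lemma utility_triangles_le {f : P → P → ℝ} {c : ℝ} (hf : ∀ q, f p q ≤ c) :
    utility (triangles s) f π p ≤ 2 * c := by
  rw [utility_triangles]
  simpa [card_tableMates] using sum_le_card_nsmul (tableMates π p) _ c fun q _ => hf q

lemma utility_triangles_eq {f : P → P → ℝ} {c : ℝ} (hf : ∀ q ∈ tableMates π p, f p q = c) :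
    utility (triangles s) f π p = 2 * c := by
  rw [utility_triangles, sum_congr rfl hf]
  simp [card_tableMates]

end Triangles

section Preferences

variable {W : Type*} (G : SimpleGraph W)

lemma prefs12_le_two (p q : W ⊕ Fin 3) : prefs12 G p q ≤ 2 := by
  rcases p with u | a <;> rcases q with v | b <;> simp only [prefs12] <;> (try split_ifs) <;>
    norm_num

lemma prefs12_inl_le_one (u : W) (q : W ⊕ Fin 3) : prefs12 G (.inl u) q ≤ 1 := by
  rcases q with v | b <;> simp only [prefs12] <;> (try split_ifs) <;> norm_num

lemma one_le_prefs12_inr (a : Fin 3) (q : W ⊕ Fin 3) : 1 ≤ prefs12 G (.inr a) q := by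
  rcases q with v | b <;> simp only [prefs12] <;> norm_num

end Preferences

lemma exists_seating_supers_last {W : Type*} {t : ℕ} (ρ : W ≃ Fin t × Fin 3) :
    ∃ π : (W ⊕ Fin 3) ≃ Fin (t + 1) × Fin 3,
      (∀ v, (π (.inl v)).1 = (ρ v).1.castSucc) ∧ ∀ a, (π (.inr a)).1 = Fin.last t :=
  ⟨(Equiv.sumCongr ρ (Equiv.uniqueProd (Fin 3) (Fin 1)).symm).trans <|
    (Equiv.sumProdDistrib _ _ _).symm.trans <| Equiv.prodCongr finSumFinEquiv (Equiv.refl _),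
    fun v => by simp; rfl, fun a => by simp; rfl⟩

variable {W : Type*} [Fintype W] {s : ℕ} {π : (W ⊕ Fin 3) ≃ Fin s × Fin 3}

lemma exists_eq_inr_of_table_eq {T : Fin s} (hT : ∀ j, (π (.inr j)).1 = T) {q : W ⊕ Fin 3}
    (hq : (π q).1 = T) : ∃ j, q = .inr j := by
  have hsub : univ.map .inr ⊆ table π T := fun q hq => by
    obtain ⟨j, -, rfl⟩ := mem_map.mp hq
    simpa using hT j
  have := eq_of_subset_of_card_le hsub (by simp [card_table])
  simpa [← this, eq_comm] using mem_table.mpr hq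

lemma not_envyFree_of_super_alone (G : SimpleGraph W) {a : Fin 3}
    (halone : ∀ j ≠ a, (π (.inr j)).1 ≠ (π (.inr a)).1) :
    ¬ envyFree (triangles s) (prefs12 G) π := by
  intro hEF
  have hutil : utility (triangles s) (prefs12 G) π (.inr a) = 2 * 1 := by
    refine utility_triangles_eq fun q hq => ?_
    rcases q with u | j
    · rfl
    · rw [mem_tableMates] at hq
      exact absurd hq.2 (halone j fun h => hq.1 (h ▸ rfl))
  obtain ⟨q, hq⟩ : (tableMates π (.inr (a + 1))).Nonempty := by
    rw [← card_pos, card_tableMates]; norm_num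
  have hqa : (π q).1 ≠ (π (.inr a)).1 := by
    rw [(mem_tableMates.mp hq).2]
    exact halone _ (by simp)
  obtain ⟨r, -, hsum⟩ :=
    exists_sum_tableMates_eq_add (mem_tableMates_comm.mp hq) (prefs12 G (.inr a))
  have henvy := hEF (.inr a) q fun h => hqa (h ▸ rfl)
  rw [utility_triangles, tableMates_swapArr (Ne.symm hqa), hsum, hutil] at henvy
  have : prefs12 G (.inr a) (.inr (a + 1)) = 2 := rfl
  linarith [one_le_prefs12_inr G a r]

lemma supers_same_table_of_envyFree (G : SimpleGraph W)
    (hEF : envyFree (triangles s) (prefs12 G) π) (j : Fin 3) :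
    (π (.inr j)).1 = (π (.inr 0)).1 := by
  by_contra h
  obtain ⟨a, ha⟩ := fin_three_exists_unique_preimage (fun j => (π (.inr j)).1) h
  exact not_envyFree_of_super_alone G (fun j hj hja => hj (ha j hja)) hEF

lemma adj_of_envyFree (G : SimpleGraph W) (hEF : envyFree (triangles s) (prefs12 G) π)
    {u v : W} (huv : u ≠ v) (hsame : (π (.inl u)).1 = (π (.inl v)).1) : G.Adj u v := by
  by_contra hna
  have hT := supers_same_table_of_envyFree G hEF
  have hu : (π (.inl u)).1 ≠ (π (.inr 0)).1 := fun h => by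
    simpa using exists_eq_inr_of_table_eq hT h
  have hgain : utility (triangles s) (prefs12 G) (swapArr π (.inl u) (.inr 0)) (.inl u) = 2 * 1 :=
    utility_triangles_eq fun q hq => by
      rw [tableMates_swapArr hu] at hq
      obtain ⟨j, rfl⟩ := exists_eq_inr_of_table_eq hT (mem_tableMates.mp hq).2
      rfl
  obtain ⟨r, -, hsum⟩ := exists_sum_tableMates_eq_add
    (mem_tableMates.mpr ⟨fun h => huv (Sum.inl_injective h).symm, hsame.symm⟩) (prefs12 G (.inl u))
  have henvy := hEF (.inl u) (.inr 0) Sum.inl_ne_inr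
  have : prefs12 G (.inl u) (.inl v) = 0 := if_neg hna
  rw [hgain, utility_triangles, hsum] at henvy
  linarith [prefs12_inl_le_one G u r]

lemma envyFree_of_cliques (G : SimpleGraph W)
    (hadj : ∀ u v, u ≠ v → (π (.inl u)).1 = (π (.inl v)).1 → G.Adj u v)
    (hsep : ∀ u a, (π (.inl u)).1 ≠ (π (.inr a)).1) :
    envyFree (triangles s) (prefs12 G) π := by
  rintro (u | a) q -
  · refine (utility_triangles_le (prefs12_inl_le_one G u)).trans
      (utility_triangles_eq fun r hr => ?_).ge
    obtain ⟨hru, hr⟩ := mem_tableMates.mp hr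
    rcases r with v | b
    · exact if_pos (hadj u v (fun h => hru (h ▸ rfl)) hr.symm)
    · exact absurd hr.symm (hsep u b)
  · refine (utility_triangles_le (prefs12_le_two G _)).trans
      (utility_triangles_eq fun r hr => ?_).ge
    rcases r with v | b
    · exact absurd (mem_tableMates.mp hr).2 (hsep v a)
    · rfl

lemma exists_partition_of_envyFree {t : ℕ} (G : SimpleGraph W)
    {π : (W ⊕ Fin 3) ≃ Fin (t + 1) × Fin 3} (hEF : envyFree (triangles (t + 1)) (prefs12 G) π) :
    ∃ g : W → Fin t,
      (∀ c : Fin t, (Finset.univ.filter fun v => g v = c).card = 3) ∧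
      (∀ u v : W, u ≠ v → g u = g v → G.Adj u v) := by
  obtain ⟨T, hT⟩ : ∃ T, ∀ j, (π (.inr j)).1 = T := ⟨_, supers_same_table_of_envyFree G hEF⟩
  have hne : ∀ u, (π (.inl u)).1 ≠ T := fun u h => by
    simpa using exists_eq_inr_of_table_eq hT h
  let g u := (finSuccAboveEquiv T).symm ⟨_, hne u⟩
  have hg : ∀ u c, g u = c ↔ (π (.inl u)).1 = T.succAbove c := fun u c => by
    simp [g, Equiv.symm_apply_eq, finSuccAboveEquiv_apply]
  refine ⟨g, fun c => ?_, fun u v huv h => adj_of_envyFree G hEF huv ?_⟩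
  · have : (univ.filter fun v => g v = c).map .inl = table π (T.succAbove c) := by
      ext (v | j)
      · simp [hg]
      · simp [hT j]
    rw [← card_map, this, card_table]
  · rw [(hg u _).mp h, (hg v _).mp rfl]

end SeatArrangement

open SeatArrangement

theorem envyFree_iff_partition_into_triangles {W : Type*} [Fintype W]
    (G : SimpleGraph W) (t : ℕ) :
    (∃ π : (W ⊕ Fin 3) ≃ (Fin (t + 1) × Fin 3),
      envyFree (triangles (t + 1)) (prefs12 G) π) ↔
    (∃ g : W → Fin t,
      (∀ c : Fin t, (Finset.univ.filter fun v => g v = c).card = 3) ∧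
      (∀ u v : W, u ≠ v → g u = g v → G.Adj u v)) := by
  refine ⟨fun ⟨π, hEF⟩ => exists_partition_of_envyFree G hEF, fun ⟨g, hcard3, hadj⟩ => ?_⟩
  obtain ⟨ρ, hρ⟩ := exists_equiv_prod_fst_eq_of_card_fiber g hcard3
  obtain ⟨π, hinl, hinr⟩ := exists_seating_supers_last ρ
  refine ⟨π, envyFree_of_cliques G (fun u v huv h => hadj u v huv ?_) fun u a => ?_⟩
  · simpa [hinl, hρ] using h
  · simp [hinl, hinr, Fin.castSucc_ne_last]
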